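/- arXiv:1506.08182 — 3 statements merged into one kernel-verified Lean document; each statement's English description precedes it below -/
import Mathlib

section
/- Let q > 0 with N < q(N+1-α), and let k_α satisfy |k_α(x,z)-k_α(y,z)| ≤ C d(x,y)(min(d(x,z),d(y,z)))^{-(N+1-α)}. Then for all x,y ∈ X, ∫_{X∖B(x,2d(x,y))} |k_α(x,z)-k_α(y,z)|^q dm(z) ≤ C' d(x,y)^{N-q(N-α)}. -/
open MeasureTheory Metric ENNReal

lemma tail_integral_le {X : Type*} [MetricSpace X] [MeasurableSpace X] [BorelSpace X]
    (m : Measure X) (N c2 s : ℝ) (hN : 0 < N) (hc2 : 0 < c2) (hs : N < s)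
    (hA : ∀ (x : X) (r : ℝ), 0 < r → m (ball x r) ≤ ENNReal.ofReal (c2 * r ^ N))
    (x : X) (R : ℝ) (hR : 0 < R) :
    ∫⁻ z in (ball x R)ᶜ, ENNReal.ofReal (dist x z ^ (-s)) ∂m ≤
      ENNReal.ofReal (c2 * 2 ^ N * (1 - 2 ^ (N - s))⁻¹ * R ^ (N - s)) := by
  have h2 : (0:ℝ) < 2 := two_pos
  set r : ℝ := (2:ℝ) ^ (N - s) with hrdef
  have hr0 : 0 < r := Real.rpow_pos_of_pos h2 _
  have hr1 : r < 1 := Real.rpow_lt_one_of_one_lt_of_neg one_lt_two (by linarith)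
  set S : ℕ → Set X := fun j => ball x (2 ^ (j+1) * R) \ ball x (2 ^ j * R) with hSdef
  have hcover : (ball x R)ᶜ ⊆ ⋃ j, S j := by
    intro z hz
    simp only [Set.mem_compl_iff, mem_ball, not_lt] at hz
    have hd : R ≤ dist x z := by rwa [dist_comm]
    have hdz : 0 < dist x z := lt_of_lt_of_le hR hd
    have ht1 : (1:ℝ) ≤ dist x z / R := (one_le_div hR).2 hd
    set n : ℕ := ⌊dist x z / R⌋₊ with hn
    have hn1 : 1 ≤ n := (Nat.one_le_floor_iff _).2 ht1
    set j : ℕ := Nat.log 2 n with hj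
    have h1 : (2:ℕ) ^ j ≤ n := Nat.pow_log_le_self 2 (by omega)
    have h2' : n < 2 ^ (j+1) := Nat.lt_pow_succ_log_self (by norm_num) n
    refine Set.mem_iUnion.2 ⟨j, ?_, ?_⟩
    · simp only [mem_ball, dist_comm z x]
      have hlt : dist x z / R < 2 ^ (j+1) := by
        calc dist x z / R < n + 1 := Nat.lt_floor_add_one _
        _ ≤ 2 ^ (j+1) := by exact_mod_cast Nat.succ_le_of_lt h2'
      calc dist x z = (dist x z / R) * R := by field_simp
      _ < 2 ^ (j+1) * R := mul_lt_mul_of_pos_right hlt hR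
    · simp only [mem_ball, dist_comm z x, not_lt]
      have hle : (2:ℝ) ^ j ≤ dist x z / R := by
        calc ((2:ℝ))^j = ((2^j : ℕ) : ℝ) := by push_cast; ring
        _ ≤ n := by exact_mod_cast h1
        _ ≤ dist x z / R := Nat.floor_le (by positivity)
      calc (2:ℝ)^j * R ≤ (dist x z / R) * R := mul_le_mul_of_nonneg_right hle hR.le
      _ = dist x z := by field_simp
  calc ∫⁻ z in (ball x R)ᶜ, ENNReal.ofReal (dist x z ^ (-s)) ∂m
      ≤ ∫⁻ z in ⋃ j, S j, ENNReal.ofReal (dist x z ^ (-s)) ∂m :=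
        lintegral_mono_set hcover
    _ ≤ ∑' j, ∫⁻ z in S j, ENNReal.ofReal (dist x z ^ (-s)) ∂m :=
        lintegral_iUnion_le _ _
    _ ≤ ∑' j, ENNReal.ofReal (c2 * 2 ^ N * R ^ (N - s) * r ^ j) := by
        refine ENNReal.tsum_le_tsum fun j => ?_
        have hbj : 0 < (2:ℝ) ^ j * R := by positivity
        have step1 : ∫⁻ z in S j, ENNReal.ofReal (dist x z ^ (-s)) ∂m ≤
            ∫⁻ z in S j, ENNReal.ofReal (((2:ℝ) ^ j * R) ^ (-s)) ∂m := by
          refine setLIntegral_mono measurable_const fun z hz => ?_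
          refine ENNReal.ofReal_le_ofReal ?_
          refine Real.rpow_le_rpow_of_nonpos hbj ?_ (by linarith)
          have hz2 := hz.2
          simp only [mem_ball, dist_comm z x, not_lt] at hz2
          exact hz2
        have step2 : m (S j) ≤ ENNReal.ofReal (c2 * ((2:ℝ) ^ (j+1) * R) ^ N) :=
          le_trans (measure_mono Set.diff_subset) (hA x _ (by positivity))
        have key : ((2:ℝ) ^ j * R) ^ (-s) * (c2 * ((2:ℝ) ^ (j+1) * R) ^ N)
            = c2 * 2 ^ N * R ^ (N - s) * r ^ j := by
          have e1 : ((2:ℝ) ^ j * R) ^ (-s) = (2:ℝ) ^ ((j:ℝ) * (-s)) * R ^ (-s) := by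
            rw [Real.mul_rpow (by positivity) hR.le, ← Real.rpow_natCast 2 j,
              ← Real.rpow_mul h2.le]
          have e2 : ((2:ℝ) ^ (j+1) * R) ^ N = (2:ℝ) ^ (((j:ℝ) + 1) * N) * R ^ N := by
            rw [Real.mul_rpow (by positivity) hR.le, ← Real.rpow_natCast 2 (j+1),
              ← Real.rpow_mul h2.le]
            push_cast
            ring_nf
          have e3 : r ^ j = (2:ℝ) ^ ((N - s) * (j:ℝ)) := by
            rw [← Real.rpow_natCast r j, hrdef, ← Real.rpow_mul h2.le]
          have e4 : R ^ (N - s) = R ^ N * R ^ (-s) := by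
            rw [← Real.rpow_add hR]; ring_nf
          have e5 : (2:ℝ) ^ ((j:ℝ) * (-s)) * (2:ℝ) ^ (((j:ℝ) + 1) * N)
              = (2:ℝ) ^ N * (2:ℝ) ^ ((N - s) * (j:ℝ)) := by
            rw [← Real.rpow_add h2, ← Real.rpow_add h2]; congr 1; ring
          rw [e1, e2, e3, e4]
          linear_combination c2 * R ^ (-s) * R ^ N * e5
        calc ∫⁻ z in S j, ENNReal.ofReal (dist x z ^ (-s)) ∂m
            ≤ ENNReal.ofReal (((2:ℝ) ^ j * R) ^ (-s)) * m (S j) := by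
              rw [← setLIntegral_const]; exact step1
          _ ≤ ENNReal.ofReal (((2:ℝ) ^ j * R) ^ (-s)) * ENNReal.ofReal (c2 * ((2:ℝ) ^ (j+1) * R) ^ N) :=
              mul_le_mul_right step2 _
          _ = ENNReal.ofReal (((2:ℝ) ^ j * R) ^ (-s) * (c2 * ((2:ℝ) ^ (j+1) * R) ^ N)) :=
              (ENNReal.ofReal_mul (by positivity)).symm
          _ = ENNReal.ofReal (c2 * 2 ^ N * R ^ (N - s) * r ^ j) := by rw [key]
    _ = ENNReal.ofReal (c2 * 2 ^ N * (1 - r)⁻¹ * R ^ (N - s)) := by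
        rw [← ENNReal.ofReal_tsum_of_nonneg (fun j => by positivity)
          ((summable_geometric_of_lt_one hr0.le hr1).mul_left _)]
        congr 1
        rw [tsum_mul_left, tsum_geometric_of_lt_one hr0.le hr1]
        ring

/-- If `N < q(N+1-α)` and
`|k_α(x,z)-k_α(y,z)| ≤ C d(x,y)(min(d(x,z),d(y,z)))^{-(N+1-α)}`, then
`∫_{X∖B(x,2d(x,y))} |k_α(x,z)-k_α(y,z)|^q dm(z) ≤ C' d(x,y)^{N-q(N-α)}`. -/
theorem kernel_diff_pow_integral_compl_ball {X : Type*} [MetricSpace X] [MeasurableSpace X]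
    [BorelSpace X]
    (m : Measure X) (N c1 c2 α C q : ℝ) (hN : 0 < N) (hc1 : 0 < c1) (hc2 : 0 < c2)
    (hA : ∀ (x : X) (r : ℝ), 0 < r →
      ENNReal.ofReal (c1 * r ^ N) ≤ m (ball x r) ∧ m (ball x r) ≤ ENNReal.ofReal (c2 * r ^ N))
    (hinf : m Set.univ = ⊤)
    (hα : 0 < α) (hα1 : α < 1) (hC : 0 < C) (hq : 0 < q) (hqN : N < q * (N + 1 - α))
    (k : X → X → ℝ)
    (hk_smooth : ∀ x y z : X, x ≠ z → y ≠ z →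
      |k x z - k y z| ≤ C * dist x y * (min (dist x z) (dist y z)) ^ (-(N + 1 - α))) :
    ∃ C' : ℝ, 0 < C' ∧ ∀ x y : X,
      (∫⁻ z in (ball x (2 * dist x y))ᶜ, ENNReal.ofReal (|k x z - k y z| ^ q) ∂m) ≤
        ENNReal.ofReal (C' * dist x y ^ (N - q * (N - α))) := by
  have h2 : (0:ℝ) < 2 := two_pos
  set s : ℝ := q * (N + 1 - α) with hs_def
  have hsN : N < s := hqN
  have hs0 : 0 < s := lt_trans hN hsN
  have hr1 : (2:ℝ) ^ (N - s) < 1 :=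
    Real.rpow_lt_one_of_one_lt_of_neg one_lt_two (by linarith)
  have hr0 : (0:ℝ) < (2:ℝ) ^ (N - s) := Real.rpow_pos_of_pos h2 _
  set K : ℝ := c2 * 2 ^ N * (1 - 2 ^ (N - s))⁻¹ with hK_def
  have hK : 0 < K :=
    mul_pos (mul_pos hc2 (Real.rpow_pos_of_pos h2 _)) (inv_pos.2 (by linarith))
  refine ⟨C ^ q * 2 ^ s * K * 2 ^ (N - s),
    mul_pos (mul_pos (mul_pos (Real.rpow_pos_of_pos hC _)
      (Real.rpow_pos_of_pos h2 _)) hK) hr0, fun x y => ?_⟩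
  rcases eq_or_lt_of_le (dist_nonneg (x := x) (y := y)) with hd0 | hd0
  · -- x = y case
    have hxy : x = y := eq_of_dist_eq_zero hd0.symm
    subst hxy
    simp [sub_self, abs_zero, Real.zero_rpow hq.ne']
  · -- 0 < dist x y
    set d : ℝ := dist x y with hd_def
    set R : ℝ := 2 * d with hR_def
    have hR : 0 < R := by positivity
    have hB0 : (0:ℝ) ≤ (C * d) ^ q * 2 ^ s := by positivity
    have hpt : ∀ z ∈ (ball x R)ᶜ, ENNReal.ofReal (|k x z - k y z| ^ q) ≤
        ENNReal.ofReal ((C * d) ^ q * 2 ^ s * dist x z ^ (-s)) := by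
      intro z hz
      simp only [Set.mem_compl_iff, mem_ball, not_lt] at hz
      have hdz : R ≤ dist x z := by rwa [dist_comm]
      have hxz : 0 < dist x z := lt_of_lt_of_le hR hdz
      have hyz2 : dist x z / 2 ≤ dist y z := by
        have ht := dist_triangle x y z
        rw [← hd_def] at ht
        rw [hR_def] at hdz
        linarith
      have hyz : 0 < dist y z := lt_of_lt_of_le (by linarith) hyz2
      have hmin : dist x z / 2 ≤ min (dist x z) (dist y z) :=
        le_min (by linarith) hyz2
      have hb1 : |k x z - k y z| ≤ C * d * (dist x z / 2) ^ (-(N + 1 - α)) := by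
        refine (hk_smooth x y z (dist_pos.1 hxz) (dist_pos.1 hyz)).trans ?_
        exact mul_le_mul_of_nonneg_left
          (Real.rpow_le_rpow_of_nonpos (by linarith) hmin (by linarith))
          (by positivity)
      refine ENNReal.ofReal_le_ofReal ?_
      have hb2 : |k x z - k y z| ^ q ≤ (C * d * (dist x z / 2) ^ (-(N + 1 - α))) ^ q :=
        Real.rpow_le_rpow (abs_nonneg _) hb1 hq.le
      refine hb2.trans (le_of_eq ?_)
      have e1 : ((dist x z / 2) ^ (-(N + 1 - α))) ^ q = (dist x z / 2) ^ (-s) := by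
        rw [← Real.rpow_mul (by positivity)]
        congr 1
        rw [hs_def]; ring
      have e2 : (dist x z / 2) ^ (-s) = dist x z ^ (-s) * 2 ^ s := by
        rw [Real.div_rpow dist_nonneg h2.le, Real.rpow_neg h2.le, div_eq_mul_inv, inv_inv]
      rw [Real.mul_rpow (by positivity) (by positivity), e1, e2]
      ring
    have hmeas : Measurable fun z : X =>
        ENNReal.ofReal ((C * d) ^ q * 2 ^ s * dist x z ^ (-s)) := by
      refine Measurable.ennreal_ofReal ?_
      exact (((continuous_const.dist continuous_id).measurable).pow_const _).const_mul _
    calc ∫⁻ z in (ball x R)ᶜ, ENNReal.ofReal (|k x z - k y z| ^ q) ∂m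
        ≤ ∫⁻ z in (ball x R)ᶜ, ENNReal.ofReal ((C * d) ^ q * 2 ^ s * dist x z ^ (-s)) ∂m :=
          setLIntegral_mono hmeas hpt
      _ = ENNReal.ofReal ((C * d) ^ q * 2 ^ s) *
          ∫⁻ z in (ball x R)ᶜ, ENNReal.ofReal (dist x z ^ (-s)) ∂m := by
          rw [← lintegral_const_mul' _ _ ENNReal.ofReal_ne_top]
          congr 1 with z
          rw [← ENNReal.ofReal_mul hB0]
      _ ≤ ENNReal.ofReal ((C * d) ^ q * 2 ^ s) * ENNReal.ofReal (K * R ^ (N - s)) := by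
          refine mul_le_mul_right ?_ _
          have := tail_integral_le m N c2 s hN hc2 hsN (fun x r hr => (hA x r hr).2) x R hR
          rwa [hK_def]
      _ ≤ ENNReal.ofReal (C ^ q * 2 ^ s * K * 2 ^ (N - s) * d ^ (N - q * (N - α))) := by
          rw [← ENNReal.ofReal_mul (by positivity)]
          refine ENNReal.ofReal_le_ofReal (le_of_eq ?_)
          have e3 : (C * d) ^ q = C ^ q * d ^ q := Real.mul_rpow hC.le hd0.le
          have e4 : R ^ (N - s) = 2 ^ (N - s) * d ^ (N - s) := by
            rw [hR_def, Real.mul_rpow h2.le hd0.le]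
          have e5 : d ^ q * d ^ (N - s) = d ^ (N - q * (N - α)) := by
            rw [← Real.rpow_add hd0]
            congr 1
            rw [hs_def]; ring
          rw [e3, e4]
          linear_combination (C ^ q * 2 ^ s * K * 2 ^ (N - s)) * e5
end

section
/- Let 0 < α < 1 and k_α satisfy k_α(x,y) ≤ C d(x,y)^{α-N} and |k_α(x,z)-k_α(y,z)| ≤ C d(x,y)(min(d(x,z),d(y,z)))^{-(N+1-α)}, with ∫ k_α(x,·)dm = 1. If f = J_α g (i.e. f(x) = ∫ g(z)k_α(x,z)dm(z)) with g locally integrable and f finite a.e., then |f(x)-f(y)| ≤ C' d(x,y)^α (Mg(x)+Mg(y)) for almost every pair x,y, where M is the Hardy–Littlewood maximal operator. -/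
/-!
Write `d = dist x y` and split `∫ |g z| |k x z - k y z|` at the ball `B(x, 2d)`.
Inside, the size bound controls `|k x z - k y z|` by `d(x,z)^(α-N)` or `d(y,z)^(α-N)`;
on the dyadic annulus of radius `ρ` around a centre `w` this weight is `≈ ρ^(α-N)`, and
upper Ahlfors regularity bounds the mass of `|g|` there by `ρ^N Mg(w)`, so the annuli
contribute a convergent geometric series `∑ (ρ 2^(-j))^α Mg(w) ≲ d^α Mg(w)`.
Outside, the smoothness bound gives `d · d(x,z)^(α-1-N)`, and the same dyadic
summation over the exterior annuli (now convergent because `α < 1`) gives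
`d · d^(α-1) Mg(x) = d^α Mg(x)`.
-/

open MeasureTheory Metric ENNReal

/-- The (centered) Hardy–Littlewood maximal function, valued in `ℝ≥0∞`. -/
noncomputable def maximalFn {X : Type*} [MetricSpace X] [MeasurableSpace X]
    (m : MeasureTheory.Measure X) (g : X → ℝ) (x : X) : ℝ≥0∞ :=
  ⨆ (r : ℝ) (_ : 0 < r),
    (m (Metric.ball x r))⁻¹ * ∫⁻ y in Metric.ball x r, ENNReal.ofReal |g y| ∂m

open Filter Topology Set

lemma rpow_le_two_rpow_abs_mul_rpow {t ρ : ℝ} (s : ℝ) (hρ : 0 < ρ) (h₁ : ρ / 2 ≤ t)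
    (h₂ : t ≤ ρ) :
    t ^ s ≤ 2 ^ |s| * ρ ^ s := by
  have ht : 0 < t := by linarith
  rcases le_or_gt 0 s with hs | hs
  · calc t ^ s ≤ ρ ^ s := Real.rpow_le_rpow ht.le h₂ hs
      _ ≤ 2 ^ |s| * ρ ^ s :=
        le_mul_of_one_le_left (by positivity) (Real.one_le_rpow one_le_two (abs_nonneg s))
  · calc t ^ s ≤ (ρ / 2) ^ s := Real.rpow_le_rpow_of_nonpos (by positivity) h₁ hs.le
      _ = 2 ^ |s| * ρ ^ s := by
        rw [Real.div_rpow hρ.le zero_le_two, abs_of_neg hs, Real.rpow_neg zero_le_two]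
        ring

lemma tsum_ofReal_mul_geometric (K : ℝ) {q : ℝ} (hq₀ : 0 ≤ q) (hq₁ : q < 1) :
    ∑' j : ℕ, ENNReal.ofReal (K * q ^ j) = ENNReal.ofReal (K * (1 - q)⁻¹) := by
  have hterm : ∀ j : ℕ,
      ENNReal.ofReal (K * q ^ j) = ENNReal.ofReal q ^ j * ENNReal.ofReal K := by
    intro j
    rw [mul_comm, ENNReal.ofReal_mul (pow_nonneg hq₀ j), ENNReal.ofReal_pow hq₀]
  simp_rw [hterm]
  rw [ENNReal.tsum_mul_right, ENNReal.tsum_geometric, ← ENNReal.ofReal_one,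
    ← ENNReal.ofReal_sub _ hq₀, ← ENNReal.ofReal_inv_of_pos (by linarith),
    ← ENNReal.ofReal_mul (by simp only [inv_nonneg]; linarith), mul_comm]

/-- No measurability of `F` is needed: the integral is split along `{v ≤ u}` instead of
using additivity of the integral. -/
lemma lintegral_mul_max_le {Ω : Type*} [MeasurableSpace Ω] (μ : Measure Ω)
    (F : Ω → ℝ≥0∞) {u v : Ω → ℝ≥0∞} (hu : Measurable u) (hv : Measurable v) :
    ∫⁻ z, F z * max (u z) (v z) ∂μ
      ≤ ∫⁻ z, F z * u z ∂μ + ∫⁻ z, F z * v z ∂μ := by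
  have hS : MeasurableSet {z | v z ≤ u z} := measurableSet_le hv hu
  rw [← lintegral_add_compl _ hS]
  refine add_le_add ?_ ?_
  · calc _ = ∫⁻ z in {z | v z ≤ u z}, F z * u z ∂μ :=
          setLIntegral_congr_fun hS fun z (hz : v z ≤ u z) => by rw [max_eq_left hz]
      _ ≤ _ := setLIntegral_le_lintegral _ _
  · calc _ = ∫⁻ z in {z | v z ≤ u z}ᶜ, F z * v z ∂μ :=
          setLIntegral_congr_fun hS.compl fun z (hz : ¬ v z ≤ u z) => by
            rw [max_eq_right (not_le.1 hz).le]
      _ ≤ _ := setLIntegral_le_lintegral _ _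

lemma ofReal_abs_integral_mul_sub_le {Ω : Type*} [MeasurableSpace Ω] {μ : Measure Ω}
    {g u v : Ω → ℝ} (hu : Integrable (fun z => g z * u z) μ)
    (hv : Integrable (fun z => g z * v z) μ) :
    ENNReal.ofReal |∫ z, g z * u z ∂μ - ∫ z, g z * v z ∂μ|
      ≤ ∫⁻ z, ENNReal.ofReal |g z| * ENNReal.ofReal |u z - v z| ∂μ := by
  rw [← integral_sub hu hv, ← Real.norm_eq_abs, ofReal_norm]
  refine (enorm_integral_le_lintegral_enorm _).trans_eq (lintegral_congr fun z => ?_)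
  rw [← mul_sub, ← ofReal_norm, Real.norm_eq_abs, abs_mul,
    ENNReal.ofReal_mul (abs_nonneg _)]

section Ahlfors

variable {X : Type*} [MetricSpace X] [MeasurableSpace X]

def IsUpperAhlforsRegular (m : Measure X) (N c : ℝ) : Prop :=
  ∀ (w : X) (r : ℝ), 0 < r → m (ball w r) ≤ ENNReal.ofReal (c * r ^ N)

lemma IsUpperAhlforsRegular.measure_singleton {m : Measure X} {N c : ℝ}
    (hm : IsUpperAhlforsRegular m N c) (hN : 0 < N) (w : X) : m {w} = 0 := by
  have hlim : Tendsto (fun r : ℝ => ENNReal.ofReal (c * r ^ N)) (𝓝[>] 0) (𝓝 0) := by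
    have h : Tendsto (fun r : ℝ => c * r ^ N) (𝓝 0) (𝓝 (c * 0 ^ N)) :=
      ((Real.continuousAt_rpow_const 0 N (Or.inr hN.le)).const_mul c).tendsto
    rw [Real.zero_rpow hN.ne', mul_zero] at h
    simpa using (ENNReal.tendsto_ofReal h).mono_left nhdsWithin_le_nhds
  refine le_antisymm (ge_of_tendsto hlim ?_) zero_le
  filter_upwards [self_mem_nhdsWithin] with r hr
  exact (measure_mono (singleton_subset_iff.2 (mem_ball_self hr))).trans (hm w r hr)

lemma IsUpperAhlforsRegular.ae_ne {m : Measure X} {N c : ℝ}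
    (hm : IsUpperAhlforsRegular m N c) (hN : 0 < N) (w : X) : ∀ᵐ z ∂m, z ≠ w :=
  measure_eq_zero_iff_ae_notMem.1 (hm.measure_singleton hN w)

lemma lintegral_ball_le_measure_mul_maximalFn (m : Measure X) (g : X → ℝ) (w : X) {r : ℝ}
    (hr : m (ball w r) ≠ ∞) :
    ∫⁻ z in ball w r, ENNReal.ofReal |g z| ∂m ≤ m (ball w r) * maximalFn m g w := by
  rcases le_or_gt r 0 with hr₀ | hr₀
  · simp [ball_eq_empty.2 hr₀]
  rcases eq_or_ne (m (ball w r)) 0 with h₀ | h₀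
  · simp [setLIntegral_measure_zero _ _ h₀]
  calc ∫⁻ z in ball w r, ENNReal.ofReal |g z| ∂m
      = m (ball w r) * ((m (ball w r))⁻¹ * ∫⁻ z in ball w r, ENNReal.ofReal |g z| ∂m) := by
        rw [← mul_assoc, ENNReal.mul_inv_cancel h₀ hr, one_mul]
    _ ≤ m (ball w r) * maximalFn m g w := by
        gcongr
        exact le_iSup₂ (f := fun r (_ : 0 < r) =>
          (m (ball w r))⁻¹ * ∫⁻ y in ball w r, ENNReal.ofReal |g y| ∂m) r hr₀

end Ahlfors

section Dyadic

variable {X : Type*} [MetricSpace X]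

def dyadicAnnulus (w : X) (ρ : ℝ) : Set X := ball w ρ \ ball w (ρ / 2)

lemma mem_dyadicAnnulus {w z : X} {ρ : ℝ} :
    z ∈ dyadicAnnulus w ρ ↔ ρ / 2 ≤ dist z w ∧ dist z w < ρ := by
  simp [dyadicAnnulus, and_comm]

lemma ball_diff_singleton_subset_iUnion_dyadicAnnulus (w : X) {R : ℝ} (hR : 0 < R) :
    ball w R \ {w} ⊆ ⋃ j : ℕ, dyadicAnnulus w (R * 2⁻¹ ^ j) := by
  classical
  rintro z ⟨hzR, hzw⟩
  have hz : 0 < dist z w := dist_pos.2 hzw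
  have hex : ∃ n : ℕ, R * 2⁻¹ ^ n ≤ dist z w := by
    obtain ⟨n, hn⟩ := exists_pow_lt_of_lt_one (div_pos hz hR) (by norm_num : (2⁻¹ : ℝ) < 1)
    exact ⟨n, by rw [lt_div_iff₀ hR] at hn; linarith⟩
  obtain ⟨j, hj⟩ : ∃ j, Nat.find hex = j + 1 :=
    Nat.exists_eq_add_one.2 <| Nat.pos_of_ne_zero fun h₀ => by
      have := Nat.find_spec hex
      rw [h₀, pow_zero, mul_one] at this
      exact (mem_ball.1 hzR).not_ge this
  have h₁ : R * 2⁻¹ ^ (j + 1) ≤ dist z w := hj ▸ Nat.find_spec hex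
  have h₂ : ¬ R * 2⁻¹ ^ j ≤ dist z w := Nat.find_min hex (by omega)
  refine mem_iUnion.2 ⟨j, mem_dyadicAnnulus.2 ⟨?_, not_le.1 h₂⟩⟩
  rw [pow_succ] at h₁
  linarith

lemma compl_ball_subset_iUnion_dyadicAnnulus (w : X) {R : ℝ} (hR : 0 < R) :
    (ball w R)ᶜ ⊆ ⋃ j : ℕ, dyadicAnnulus w (2 * R * 2 ^ j) := by
  intro z hz
  obtain ⟨j, h₁, h₂⟩ := exists_nat_pow_near ((one_le_div hR).2 (not_lt.1 hz)) one_lt_two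
  rw [le_div_iff₀ hR] at h₁
  rw [div_lt_iff₀ hR, pow_succ] at h₂
  exact mem_iUnion.2 ⟨j, mem_dyadicAnnulus.2 ⟨by linarith, by linarith⟩⟩

variable [MeasurableSpace X] [OpensMeasurableSpace X] {m : Measure X} {N c : ℝ}

lemma lintegral_dyadicAnnulus_mul_rpow_le (hm : IsUpperAhlforsRegular m N c) (g : X → ℝ)
    (w : X) {ρ : ℝ} (hρ : 0 < ρ) (s : ℝ) :
    ∫⁻ z in dyadicAnnulus w ρ, ENNReal.ofReal |g z| * ENNReal.ofReal (dist w z ^ s) ∂m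
      ≤ ENNReal.ofReal (2 ^ |s| * c * ρ ^ (N + s)) * maximalFn m g w := by
  have hweight : ∀ z ∈ dyadicAnnulus w ρ,
      ENNReal.ofReal |g z| * ENNReal.ofReal (dist w z ^ s)
        ≤ ENNReal.ofReal (2 ^ |s| * ρ ^ s) * ENNReal.ofReal |g z| := by
    intro z hz
    rw [mem_dyadicAnnulus, dist_comm] at hz
    rw [mul_comm]
    gcongr
    exact rpow_le_two_rpow_abs_mul_rpow s hρ hz.1 hz.2.le
  have hball : m (ball w ρ) ≠ ∞ := ((hm w ρ hρ).trans_lt ofReal_lt_top).ne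
  calc _ ≤ ∫⁻ z in dyadicAnnulus w ρ,
          ENNReal.ofReal (2 ^ |s| * ρ ^ s) * ENNReal.ofReal |g z| ∂m :=
        setLIntegral_mono' (measurableSet_ball.diff measurableSet_ball) hweight
    _ = ENNReal.ofReal (2 ^ |s| * ρ ^ s) *
          ∫⁻ z in dyadicAnnulus w ρ, ENNReal.ofReal |g z| ∂m :=
        lintegral_const_mul' _ _ ofReal_ne_top
    _ ≤ ENNReal.ofReal (2 ^ |s| * ρ ^ s) * ∫⁻ z in ball w ρ, ENNReal.ofReal |g z| ∂m := by
        gcongr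
        exact sdiff_subset
    _ ≤ ENNReal.ofReal (2 ^ |s| * ρ ^ s) * (ENNReal.ofReal (c * ρ ^ N) * maximalFn m g w) := by
        gcongr
        exact (lintegral_ball_le_measure_mul_maximalFn m g w hball).trans
          (mul_le_mul_left (hm w ρ hρ) _)
    _ = ENNReal.ofReal (2 ^ |s| * c * ρ ^ (N + s)) * maximalFn m g w := by
        rw [← mul_assoc, ← ENNReal.ofReal_mul (by positivity), Real.rpow_add hρ]
        ring_nf

lemma lintegral_mul_rpow_le_of_ae_subset_iUnion_dyadicAnnulus
    (hm : IsUpperAhlforsRegular m N c) (g : X → ℝ) (w : X) {E : Set X} {a b s : ℝ}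
    (ha : 0 < a) (hb : 0 < b) (hq : b ^ (N + s) < 1)
    (hE : E ≤ᵐ[m] ⋃ j : ℕ, dyadicAnnulus w (a * b ^ j)) :
    ∫⁻ z in E, ENNReal.ofReal |g z| * ENNReal.ofReal (dist w z ^ s) ∂m
      ≤ ENNReal.ofReal (2 ^ |s| * c * (1 - b ^ (N + s))⁻¹ * a ^ (N + s)) *
          maximalFn m g w := by
  calc _ ≤ ∫⁻ z in ⋃ j : ℕ, dyadicAnnulus w (a * b ^ j),
          ENNReal.ofReal |g z| * ENNReal.ofReal (dist w z ^ s) ∂m := lintegral_mono_set' hE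
    _ ≤ ∑' j : ℕ, ∫⁻ z in dyadicAnnulus w (a * b ^ j),
          ENNReal.ofReal |g z| * ENNReal.ofReal (dist w z ^ s) ∂m := lintegral_iUnion_le _ _
    _ ≤ ∑' j : ℕ, ENNReal.ofReal (2 ^ |s| * c * a ^ (N + s) * (b ^ (N + s)) ^ j)
          * maximalFn m g w := by
        refine ENNReal.tsum_le_tsum fun j => ?_
        convert lintegral_dyadicAnnulus_mul_rpow_le hm g w (by positivity : 0 < a * b ^ j) s
          using 3
        rw [Real.mul_rpow ha.le (by positivity), Real.rpow_pow_comm hb.le, mul_assoc]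
    _ = _ := by
        rw [ENNReal.tsum_mul_right, tsum_ofReal_mul_geometric _ (by positivity) hq]
        ring_nf

lemma lintegral_ball_mul_rpow_le (hm : IsUpperAhlforsRegular m N c) (hN : 0 < N)
    (g : X → ℝ) (w : X) {R t : ℝ} (hR : 0 < R) (ht : 0 < t) :
    ∫⁻ z in ball w R, ENNReal.ofReal |g z| * ENNReal.ofReal (dist w z ^ (t - N)) ∂m
      ≤ ENNReal.ofReal (2 ^ |t - N| * c * (1 - 2⁻¹ ^ t)⁻¹ * R ^ t) * maximalFn m g w := by
  have hE : ball w R ≤ᵐ[m] ⋃ j : ℕ, dyadicAnnulus w (R * 2⁻¹ ^ j) :=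
    (sdiff_null_ae_eq_self (hm.measure_singleton hN w)).symm.le.trans
      (ball_diff_singleton_subset_iUnion_dyadicAnnulus w hR).eventuallyLE
  have hq : (2⁻¹ : ℝ) ^ (N + (t - N)) < 1 := by
    rw [add_sub_cancel]
    exact Real.rpow_lt_one (by norm_num) (by norm_num) ht
  simpa only [add_sub_cancel] using
    lintegral_mul_rpow_le_of_ae_subset_iUnion_dyadicAnnulus hm g w hR (by norm_num) hq hE

lemma lintegral_compl_ball_mul_rpow_le (hm : IsUpperAhlforsRegular m N c)
    (g : X → ℝ) (w : X) {R t : ℝ} (hR : 0 < R) (ht : t < 0) :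
    ∫⁻ z in (ball w R)ᶜ, ENNReal.ofReal |g z| * ENNReal.ofReal (dist w z ^ (t - N)) ∂m
      ≤ ENNReal.ofReal (2 ^ |t - N| * c * (1 - 2 ^ t)⁻¹ * (2 * R) ^ t) * maximalFn m g w := by
  have hq : (2 : ℝ) ^ (N + (t - N)) < 1 := by
    rw [add_sub_cancel]
    exact Real.rpow_lt_one_of_one_lt_of_neg one_lt_two ht
  simpa only [add_sub_cancel] using
    lintegral_mul_rpow_le_of_ae_subset_iUnion_dyadicAnnulus hm g w (by positivity) two_pos hq
      (compl_ball_subset_iUnion_dyadicAnnulus w hR).eventuallyLE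

lemma lintegral_ball_mul_max_rpow_le (hm : IsUpperAhlforsRegular m N c) (hN : 0 < N)
    {α : ℝ} (hα : 0 < α) (g : X → ℝ) {x y : X} (hxy : x ≠ y) :
    ∫⁻ z in ball x (2 * dist x y), ENNReal.ofReal |g z| *
        max (ENNReal.ofReal (dist x z ^ (α - N))) (ENNReal.ofReal (dist y z ^ (α - N))) ∂m
      ≤ ENNReal.ofReal (2 ^ |α - N| * c * (1 - 2⁻¹ ^ α)⁻¹ * (3 * dist x y) ^ α) *
          (maximalFn m g x + maximalFn m g y) := by
  set d := dist x y
  have hd : 0 < d := dist_pos.2 hxy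
  have hx : ball x (2 * d) ⊆ ball x (3 * d) := ball_subset_ball (by linarith)
  have hy : ball x (2 * d) ⊆ ball y (3 * d) :=
    ball_subset_ball' (by change 2 * d + d ≤ 3 * d; linarith)
  rw [mul_add]
  calc _ ≤ (∫⁻ z in ball x (3 * d),
          ENNReal.ofReal |g z| * ENNReal.ofReal (dist x z ^ (α - N)) ∂m) +
        ∫⁻ z in ball y (3 * d),
          ENNReal.ofReal |g z| * ENNReal.ofReal (dist y z ^ (α - N)) ∂m :=
        (lintegral_mul_max_le _ _ (by fun_prop) (by fun_prop)).trans
          (add_le_add (lintegral_mono_set hx) (lintegral_mono_set hy))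
    _ ≤ _ := add_le_add (lintegral_ball_mul_rpow_le hm hN g x (by positivity) hα)
          (lintegral_ball_mul_rpow_le hm hN g y (by positivity) hα)

lemma dist_mul_lintegral_compl_ball_mul_rpow_le (hm : IsUpperAhlforsRegular m N c)
    (hc : 0 ≤ c) {α : ℝ} (hα₁ : α < 1) (g : X → ℝ) {x y : X} (hxy : x ≠ y) :
    ENNReal.ofReal (dist x y) * ∫⁻ z in (ball x (2 * dist x y))ᶜ,
        ENNReal.ofReal |g z| * ENNReal.ofReal (dist x z ^ (α - 1 - N)) ∂m
      ≤ ENNReal.ofReal (2 ^ |α - 1 - N| * c * (1 - 2 ^ (α - 1))⁻¹ * dist x y ^ α) *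
          maximalFn m g x := by
  set d := dist x y
  have hd : 0 < d := dist_pos.2 hxy
  have hq : 0 < 1 - (2 : ℝ) ^ (α - 1) :=
    sub_pos.2 (Real.rpow_lt_one_of_one_lt_of_neg one_lt_two (by linarith))
  have hdecay : d * (2 * (2 * d)) ^ (α - 1) ≤ d ^ α := by
    calc d * (2 * (2 * d)) ^ (α - 1) ≤ d * d ^ (α - 1) :=
          mul_le_mul_of_nonneg_left
            (Real.rpow_le_rpow_of_nonpos hd (by linarith) (by linarith)) hd.le
      _ = d ^ α := by rw [Real.rpow_sub_one hd.ne']; field_simp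
  calc _ ≤ ENNReal.ofReal d * (ENNReal.ofReal (2 ^ |α - 1 - N| * c * (1 - 2 ^ (α - 1))⁻¹ *
          (2 * (2 * d)) ^ (α - 1)) * maximalFn m g x) :=
        mul_le_mul_right (lintegral_compl_ball_mul_rpow_le hm g x (by positivity) (by linarith)) _
    _ ≤ _ := by
        rw [← mul_assoc, ← ENNReal.ofReal_mul hd.le]
        gcongr ENNReal.ofReal ?_ * _
        calc d * (2 ^ |α - 1 - N| * c * (1 - 2 ^ (α - 1))⁻¹ * (2 * (2 * d)) ^ (α - 1))
            = 2 ^ |α - 1 - N| * c * (1 - 2 ^ (α - 1))⁻¹ * (d * (2 * (2 * d)) ^ (α - 1)) := by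
              ring
          _ ≤ _ := by gcongr

end Dyadic

section Kernel

variable {X : Type*} [MetricSpace X] {k : X → X → ℝ} {N α C : ℝ}

lemma abs_sub_kernel_le_mul_max_rpow (hC : 0 ≤ C) (hk_nn : ∀ x y, 0 ≤ k x y)
    (hk_size : ∀ x y : X, x ≠ y → k x y ≤ C * dist x y ^ (α - N)) {x y z : X}
    (hzx : z ≠ x) (hzy : z ≠ y) :
    |k x z - k y z| ≤ C * max (dist x z ^ (α - N)) (dist y z ^ (α - N)) := by
  have hx := hk_size x z hzx.symm
  have hy := hk_size y z hzy.symm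
  rw [mul_max_of_nonneg _ _ hC, abs_sub_le_iff]
  constructor <;> linarith [le_max_left (C * dist x z ^ (α - N)) (C * dist y z ^ (α - N)),
    le_max_right (C * dist x z ^ (α - N)) (C * dist y z ^ (α - N)), hk_nn x z, hk_nn y z]

lemma abs_sub_kernel_le_of_two_mul_dist_le (hC : 0 ≤ C) (hN : 0 < N) (hα₁ : α < 1)
    (hk_smooth : ∀ x y z : X, x ≠ z → y ≠ z →
      |k x z - k y z| ≤ C * dist x y * (min (dist x z) (dist y z)) ^ (-(N + 1 - α)))
    {x y z : X} (hxy : x ≠ y) (hz : 2 * dist x y ≤ dist x z) :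
    |k x z - k y z| ≤ C * 2 ^ (N + 1 - α) * dist x y * dist x z ^ (α - 1 - N) := by
  have hd : 0 < dist x y := dist_pos.2 hxy
  have hxz : 0 < dist x z := by linarith
  have hyz : dist x z / 2 ≤ dist y z := by linarith [dist_triangle x y z, dist_comm x y]
  have hmin : dist x z / 2 ≤ min (dist x z) (dist y z) := le_min (by linarith) hyz
  calc |k x z - k y z|
      ≤ C * dist x y * (min (dist x z) (dist y z)) ^ (-(N + 1 - α)) :=
        hk_smooth x y z (dist_pos.1 hxz) (dist_pos.1 (by linarith))
    _ ≤ C * dist x y * (dist x z / 2) ^ (-(N + 1 - α)) :=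
        mul_le_mul_of_nonneg_left
          (Real.rpow_le_rpow_of_nonpos (by positivity) hmin (by linarith)) (by positivity)
    _ = C * 2 ^ (N + 1 - α) * dist x y * dist x z ^ (α - 1 - N) := by
        rw [Real.div_rpow hxz.le zero_le_two, Real.rpow_neg zero_le_two, div_inv_eq_mul,
          show -(N + 1 - α) = α - 1 - N by ring]
        ring

end Kernel

section Potential

variable {X : Type*} [MetricSpace X] [MeasurableSpace X] [OpensMeasurableSpace X]
  {m : Measure X} {N c α C : ℝ} {k : X → X → ℝ}

lemma exists_lintegral_ball_mul_abs_sub_kernel_le (hm : IsUpperAhlforsRegular m N c)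
    (hN : 0 < N) (hc : 0 < c) (hα : 0 < α) (hC : 0 < C) (hk_nn : ∀ x y, 0 ≤ k x y)
    (hk_size : ∀ x y : X, x ≠ y → k x y ≤ C * dist x y ^ (α - N)) :
    ∃ K > 0, ∀ (g : X → ℝ) (x y : X), x ≠ y →
      ∫⁻ z in ball x (2 * dist x y), ENNReal.ofReal |g z| * ENNReal.ofReal |k x z - k y z| ∂m
        ≤ ENNReal.ofReal (K * dist x y ^ α) * (maximalFn m g x + maximalFn m g y) := by
  have hq : 0 < 1 - (2⁻¹ : ℝ) ^ α :=
    sub_pos.2 (Real.rpow_lt_one (by norm_num) (by norm_num) hα)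
  refine ⟨C * (2 ^ |α - N| * c * (1 - 2⁻¹ ^ α)⁻¹) * 3 ^ α, by positivity,
    fun g x y hxy => ?_⟩
  have hpt : ∀ᵐ z ∂m, ENNReal.ofReal |g z| * ENNReal.ofReal |k x z - k y z|
      ≤ ENNReal.ofReal C * (ENNReal.ofReal |g z| *
        max (ENNReal.ofReal (dist x z ^ (α - N))) (ENNReal.ofReal (dist y z ^ (α - N)))) := by
    filter_upwards [hm.ae_ne hN x, hm.ae_ne hN y] with z hzx hzy
    calc _ ≤ ENNReal.ofReal |g z| *
          ENNReal.ofReal (C * max (dist x z ^ (α - N)) (dist y z ^ (α - N))) := by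
          gcongr
          exact abs_sub_kernel_le_mul_max_rpow hC.le hk_nn hk_size hzx hzy
      _ = _ := by rw [ENNReal.ofReal_mul hC.le, ENNReal.ofReal_max]; ring
  calc _ ≤ ENNReal.ofReal C * ∫⁻ z in ball x (2 * dist x y), ENNReal.ofReal |g z| *
          max (ENNReal.ofReal (dist x z ^ (α - N)))
            (ENNReal.ofReal (dist y z ^ (α - N))) ∂m := by
        rw [← lintegral_const_mul' _ _ ofReal_ne_top]
        exact lintegral_mono_ae (ae_restrict_of_ae hpt)
    _ ≤ ENNReal.ofReal C *
          (ENNReal.ofReal (2 ^ |α - N| * c * (1 - 2⁻¹ ^ α)⁻¹ * (3 * dist x y) ^ α) *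
            (maximalFn m g x + maximalFn m g y)) := by
        gcongr
        exact lintegral_ball_mul_max_rpow_le hm hN hα g hxy
    _ = _ := by
        rw [← mul_assoc, ← ENNReal.ofReal_mul hC.le,
          Real.mul_rpow zero_le_three dist_nonneg]
        ring_nf

lemma exists_lintegral_compl_ball_mul_abs_sub_kernel_le (hm : IsUpperAhlforsRegular m N c)
    (hN : 0 < N) (hc : 0 < c) (hα₁ : α < 1) (hC : 0 < C)
    (hk_smooth : ∀ x y z : X, x ≠ z → y ≠ z →
      |k x z - k y z| ≤ C * dist x y * (min (dist x z) (dist y z)) ^ (-(N + 1 - α))) :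
    ∃ K > 0, ∀ (g : X → ℝ) (x y : X), x ≠ y →
      ∫⁻ z in (ball x (2 * dist x y))ᶜ,
          ENNReal.ofReal |g z| * ENNReal.ofReal |k x z - k y z| ∂m
        ≤ ENNReal.ofReal (K * dist x y ^ α) * maximalFn m g x := by
  have hq : 0 < 1 - (2 : ℝ) ^ (α - 1) :=
    sub_pos.2 (Real.rpow_lt_one_of_one_lt_of_neg one_lt_two (by linarith))
  refine ⟨C * 2 ^ (N + 1 - α) * (2 ^ |α - 1 - N| * c * (1 - 2 ^ (α - 1))⁻¹), by positivity,
    fun g x y hxy => ?_⟩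
  have hpt : ∀ z ∈ (ball x (2 * dist x y))ᶜ,
      ENNReal.ofReal |g z| * ENNReal.ofReal |k x z - k y z|
        ≤ ENNReal.ofReal (C * 2 ^ (N + 1 - α)) * (ENNReal.ofReal (dist x y) *
          (ENNReal.ofReal |g z| * ENNReal.ofReal (dist x z ^ (α - 1 - N)))) := by
    intro z hz
    rw [mem_compl_iff, mem_ball, not_lt, dist_comm z x] at hz
    calc _ ≤ ENNReal.ofReal |g z| *
          ENNReal.ofReal (C * 2 ^ (N + 1 - α) * dist x y * dist x z ^ (α - 1 - N)) := by
          gcongr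
          exact abs_sub_kernel_le_of_two_mul_dist_le hC.le hN hα₁ hk_smooth hxy hz
      _ = _ := by
          rw [ENNReal.ofReal_mul (by positivity), ENNReal.ofReal_mul (by positivity)]
          ring
  calc _ ≤ ENNReal.ofReal (C * 2 ^ (N + 1 - α)) * (ENNReal.ofReal (dist x y) *
          ∫⁻ z in (ball x (2 * dist x y))ᶜ,
            ENNReal.ofReal |g z| * ENNReal.ofReal (dist x z ^ (α - 1 - N)) ∂m) := by
        rw [← lintegral_const_mul' _ _ ofReal_ne_top, ← lintegral_const_mul' _ _ ofReal_ne_top]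
        exact setLIntegral_mono' measurableSet_ball.compl hpt
    _ ≤ ENNReal.ofReal (C * 2 ^ (N + 1 - α)) *
          (ENNReal.ofReal (2 ^ |α - 1 - N| * c * (1 - 2 ^ (α - 1))⁻¹ * dist x y ^ α) *
            maximalFn m g x) :=
        mul_le_mul_right (dist_mul_lintegral_compl_ball_mul_rpow_le hm hc.le hα₁ g hxy) _
    _ = _ := by
        rw [← mul_assoc, ← ENNReal.ofReal_mul (by positivity)]
        ring_nf

end Potential

theorem bessel_potential_pointwise_hajlasz_general {X : Type*} [MetricSpace X] [MeasurableSpace X]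
    [BorelSpace X]
    (m : Measure X) (N c1 c2 α C : ℝ) (hN : 0 < N) (hc2 : 0 < c2)
    (hA : ∀ (x : X) (r : ℝ), 0 < r →
      ENNReal.ofReal (c1 * r ^ N) ≤ m (ball x r) ∧ m (ball x r) ≤ ENNReal.ofReal (c2 * r ^ N))
    (hα : 0 < α) (hα1 : α < 1) (hC : 0 < C)
    (k : X → X → ℝ)
    (hk_nn : ∀ x y, 0 ≤ k x y)
    (hk_size : ∀ x y : X, x ≠ y → k x y ≤ C * dist x y ^ (α - N))
    (hk_smooth : ∀ x y z : X, x ≠ z → y ≠ z →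
      |k x z - k y z| ≤ C * dist x y * (min (dist x z) (dist y z)) ^ (-(N + 1 - α))) :
    ∃ C' : ℝ, 0 < C' ∧ ∀ (g f : X → ℝ), LocallyIntegrable g m →
      (∀ x, Integrable (fun z => g z * k x z) m) →
      (∀ x, f x = ∫ z, g z * k x z ∂m) →
      ∀ᵐ p ∂(m.prod m),
        ENNReal.ofReal |f p.1 - f p.2| ≤
          ENNReal.ofReal (C' * dist p.1 p.2 ^ α) * (maximalFn m g p.1 + maximalFn m g p.2) := by
  have hm : IsUpperAhlforsRegular m N c2 := fun x r hr => (hA x r hr).2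
  obtain ⟨K₁, hK₁, hnear⟩ :=
    exists_lintegral_ball_mul_abs_sub_kernel_le hm hN hc2 hα hC hk_nn hk_size
  obtain ⟨K₂, hK₂, hfar⟩ :=
    exists_lintegral_compl_ball_mul_abs_sub_kernel_le hm hN hc2 hα1 hC hk_smooth
  refine ⟨K₁ + K₂, by positivity, fun g f _ hgk hf => ae_of_all _ ?_⟩
  rintro ⟨x, y⟩
  rcases eq_or_ne x y with rfl | hxy
  · simp
  calc ENNReal.ofReal |f x - f y|
      ≤ ∫⁻ z, ENNReal.ofReal |g z| * ENNReal.ofReal |k x z - k y z| ∂m := by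
        rw [hf x, hf y]
        exact ofReal_abs_integral_mul_sub_le (hgk x) (hgk y)
    _ = (∫⁻ z in ball x (2 * dist x y),
          ENNReal.ofReal |g z| * ENNReal.ofReal |k x z - k y z| ∂m) +
        ∫⁻ z in (ball x (2 * dist x y))ᶜ,
          ENNReal.ofReal |g z| * ENNReal.ofReal |k x z - k y z| ∂m :=
        (lintegral_add_compl _ measurableSet_ball).symm
    _ ≤ ENNReal.ofReal (K₁ * dist x y ^ α) * (maximalFn m g x + maximalFn m g y) +
        ENNReal.ofReal (K₂ * dist x y ^ α) * maximalFn m g x :=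
        add_le_add (hnear g x y hxy) (hfar g x y hxy)
    _ ≤ ENNReal.ofReal ((K₁ + K₂) * dist x y ^ α) * (maximalFn m g x + maximalFn m g y) := by
        rw [add_mul, ENNReal.ofReal_add (by positivity) (by positivity), add_mul]
        gcongr
        exact le_self_add

/-- If `f = J_α g` is finite a.e., `0 < α < 1`, then for a.e. pair `x, y`,
`|f(x)-f(y)| ≤ C' d(x,y)^α (Mg(x) + Mg(y))`. -/
theorem bessel_potential_pointwise_hajlasz {X : Type*} [MetricSpace X] [MeasurableSpace X]
    [BorelSpace X]
    (m : Measure X) (N c1 c2 α C : ℝ) (hN : 0 < N) (hc1 : 0 < c1) (hc2 : 0 < c2)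
    (hA : ∀ (x : X) (r : ℝ), 0 < r →
      ENNReal.ofReal (c1 * r ^ N) ≤ m (ball x r) ∧ m (ball x r) ≤ ENNReal.ofReal (c2 * r ^ N))
    (hinf : m Set.univ = ⊤)
    (hα : 0 < α) (hα1 : α < 1) (hC : 0 < C)
    (k : X → X → ℝ)
    (hk_nn : ∀ x y, 0 ≤ k x y)
    (hk_norm : ∀ x : X, (∫ z, k x z ∂m) = 1)
    (hk_size : ∀ x y : X, x ≠ y → k x y ≤ C * dist x y ^ (α - N))
    (hk_smooth : ∀ x y z : X, x ≠ z → y ≠ z →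
      |k x z - k y z| ≤ C * dist x y * (min (dist x z) (dist y z)) ^ (-(N + 1 - α))) :
    ∃ C' : ℝ, 0 < C' ∧ ∀ (g f : X → ℝ), LocallyIntegrable g m →
      (∀ x, Integrable (fun z => g z * k x z) m) →
      (∀ x, f x = ∫ z, g z * k x z ∂m) →
      ∀ᵐ p ∂(m.prod m),
        ENNReal.ofReal |f p.1 - f p.2| ≤
          ENNReal.ofReal (C' * dist p.1 p.2 ^ α) * (maximalFn m g p.1 + maximalFn m g p.2) :=
  bessel_potential_pointwise_hajlasz_general m N c1 c2 α C hN hc2 hA hα hα1 hC k hk_nn hk_size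
    hk_smooth
end

section
/- With q as in the previous statement, for 0 < α and all x ≠ z, the kernel N_{α,v}(x,z) = ∫_0^∞ (1+(uv)^α)^{-1} ∫_X q(x,y,u) q(y,z,uv) dm(y) du/u satisfies |N_{α,v}(x,z)| ≤ C min(v, 1/v) d(x,z)^{-N}. -/
/-!
The inner integral `∫ q(x,y,s) q(y,z,t) dm(y)` gains a factor `t / s` over the trivial bound:
the cancellation of the finer factor `q(·,z,t)` lets one subtract from the coarser factor its
value at `z`, and the Lipschitz bound makes the difference `O(t / s^{N+1})` on the ball `B(z, 5t)`
carrying `q(·,z,t)`. Applied with the finer scale in the second slot this bounds the inner integral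
of `N_{α,v}` by `min(v, 1/v) u^{-N}`, uniformly in `x, z`. By the support condition it vanishes
for `4u(1 + v) < d(x,z)`, so the `du/u` integral only runs over `u ≳ d(x,z)/(1+v)`, where
`∫ u^{-N-1} du` produces `d(x,z)^{-N}`. The weight `(1 + (uv)^α)⁻¹` is at most one.
-/

open MeasureTheory Metric ENNReal

theorem abs_integral_mul_le_of_integral_eq_zero {X : Type*} [MeasurableSpace X] {m : Measure X}
    {f g : X → ℝ} {s : Set X} {c A B : ℝ} (hf : AEStronglyMeasurable f m)
    (hg : AEStronglyMeasurable g m) (hs : MeasurableSet s) (hs_fin : m s ≠ ⊤)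
    (hf_osc : ∀ y ∈ s, |f y - c| ≤ A) (hg_bound : ∀ y, |g y| ≤ B)
    (hg_supp : ∀ y ∉ s, g y = 0) (hg_mean : ∫ y, g y ∂m = 0) :
    |∫ y, f y * g y ∂m| ≤ A * B * m.real s := by
  have hfg_bound : ∀ y ∈ s, ‖(f y - c) * g y‖ ≤ A * B := fun y hy => by
    rw [Real.norm_eq_abs, abs_mul]
    exact mul_le_mul (hf_osc y hy) (hg_bound y) (abs_nonneg _) ((abs_nonneg _).trans (hf_osc y hy))
  have hfg_supp : ∀ y ∉ s, (f y - c) * g y = 0 := fun y hy => by rw [hg_supp y hy, mul_zero]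
  have hg_int : Integrable g m :=
    (Measure.integrableOn_of_bounded hs_fin hg (M := B) (ae_of_all _ hg_bound)
      ).integrable_of_forall_notMem_eq_zero hg_supp
  have hfg_int : Integrable (fun y => (f y - c) * g y) m :=
    (Measure.integrableOn_of_bounded hs_fin ((hf.sub aestronglyMeasurable_const).mul hg)
      ((ae_restrict_iff' hs).2 (ae_of_all _ hfg_bound))).integrable_of_forall_notMem_eq_zero
      hfg_supp
  have hcentre : ∫ y, f y * g y ∂m = ∫ y in s, (f y - c) * g y ∂m := by
    rw [setIntegral_eq_integral_of_forall_compl_eq_zero hfg_supp]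
    have hsplit := integral_add hfg_int (hg_int.const_mul c)
    rw [integral_const_mul, hg_mean, mul_zero, add_zero] at hsplit
    rw [← hsplit]
    congr 1 with y
    ring
  rw [hcentre, ← Real.norm_eq_abs]
  exact norm_setIntegral_le_of_norm_le_const hs_fin.lt_top hfg_bound

theorem abs_integral_Ioi_le_of_eq_zero_of_le_rpow {F : ℝ → ℝ} {N a K : ℝ} (hN : 0 < N)
    (ha : 0 < a) (hF_zero : ∀ u, 0 < u → u < a → F u = 0)
    (hF_le : ∀ u, a < u → |F u| ≤ K * u ^ (-N - 1)) :
    |∫ u in Set.Ioi 0, F u| ≤ K * a ^ (-N) / N := by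
  have hexp : -N - 1 < -1 := by linarith
  have hrestrict : ∫ u in Set.Ioi 0, F u = ∫ u in Set.Ioi a, F u := by
    refine (setIntegral_eq_of_subset_of_forall_sdiff_eq_zero measurableSet_Ioi
      (Set.Ici_subset_Ioi.2 ha) fun u hu => ?_).trans integral_Ici_eq_integral_Ioi
    exact hF_zero u hu.1 (not_le.1 hu.2)
  calc |∫ u in Set.Ioi 0, F u| ≤ ∫ u in Set.Ioi a, K * u ^ (-N - 1) := by
        rw [hrestrict, ← Real.norm_eq_abs]
        exact norm_integral_le_of_norm_le ((integrableOn_Ioi_rpow_of_lt hexp ha).const_mul K)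
          ((ae_restrict_iff' measurableSet_Ioi).2 (ae_of_all _ hF_le))
    _ = K * a ^ (-N) / N := by
        rw [integral_const_mul, integral_Ioi_rpow_of_lt hexp ha, sub_add_cancel, neg_div_neg_eq,
          mul_div_assoc]

theorem abs_inv_one_add_rpow_mul_div_le {w u : ℝ} (hw : 0 ≤ w) (hu : 0 < u) (α a : ℝ) :
    |(1 + w ^ α)⁻¹ * a / u| ≤ |a| / u := by
  have hpos : 0 < 1 + w ^ α := by positivity
  rw [abs_div, abs_mul, abs_of_pos (inv_pos.2 hpos), abs_of_pos hu]
  gcongr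
  exact mul_le_of_le_one_left (abs_nonneg a) (inv_le_one_of_one_le₀ (by
    linarith [Real.rpow_nonneg hw α]))

section Kernel

variable {X : Type*} [MetricSpace X] [MeasurableSpace X] {m : Measure X} {N C : ℝ}
  {q : X → X → ℝ → ℝ}

theorem integral_q_mul_q_eq_zero_of_lt_dist
    (hq_supp : ∀ x y t, 0 < t → 4 * t < dist x y → q x y t = 0) {s t : ℝ} {x z : X}
    (hs : 0 < s) (ht : 0 < t) (hxz : 4 * s + 4 * t < dist x z) :
    ∫ y, q x y s * q y z t ∂m = 0 := by
  have hzero : ∀ y, q x y s * q y z t = 0 := fun y => by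
    rcases lt_or_ge (4 * s) (dist x y) with h | h
    · rw [hq_supp x y s hs h, zero_mul]
    · rw [hq_supp y z t ht (by linarith [dist_triangle x y z]), mul_zero]
  simp only [hzero, integral_zero]

theorem abs_integral_q_mul_q_le [BorelSpace X] {c2 : ℝ} (hc2 : 0 ≤ c2) (hC : 0 ≤ C)
    (hm : ∀ (x : X) (r : ℝ), 0 < r → m (ball x r) ≤ ENNReal.ofReal (c2 * r ^ N))
    (hq_size : ∀ x y t, 0 < t → |q x y t| ≤ C / t ^ N)
    (hq_supp : ∀ x y t, 0 < t → 4 * t < dist x y → q x y t = 0)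
    (hq_cancel : ∀ (x : X) (t : ℝ), 0 < t → (∫ y, q x y t ∂m) = 0)
    (hq_symm : ∀ x y t, q x y t = q y x t)
    (hq_lip : ∀ x x' y t, 0 < t → |q x y t - q x' y t| ≤ C * dist x x' / t ^ (N + 1))
    {s t : ℝ} (hs : 0 < s) (ht : 0 < t) (x z : X) :
    |∫ y, q x y s * q y z t ∂m| ≤ 5 ^ (N + 1) * C ^ 2 * c2 * t / s ^ (N + 1) := by
  have hcont : ∀ w r, 0 < r → Continuous fun y => q y w r := fun w r hr =>
    (LipschitzWith.of_dist_le_mul (K := (C / r ^ (N + 1)).toNNReal) fun y y' => by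
      rw [Real.dist_eq, Real.coe_toNNReal _ (by positivity)]
      exact (hq_lip y y' w r hr).trans_eq (by ring)).continuous
  have hsupp : ∀ y ∉ ball z (5 * t), q y z t = 0 := fun y hy =>
    hq_supp y z t ht (by rw [mem_ball, not_lt] at hy; linarith)
  have hosc : ∀ y ∈ ball z (5 * t), |q x y s - q x z s| ≤ C * (5 * t) / s ^ (N + 1) :=
    fun y hy => by
      rw [hq_symm x y, hq_symm x z]
      exact (hq_lip y z x s hs).trans (by gcongr; exact (mem_ball.1 hy).le)
  have hball : m (ball z (5 * t)) ≤ ENNReal.ofReal (c2 * (5 * t) ^ N) := hm z _ (by positivity)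
  calc |∫ y, q x y s * q y z t ∂m|
      ≤ C * (5 * t) / s ^ (N + 1) * (C / t ^ N) * m.real (ball z (5 * t)) :=
        abs_integral_mul_le_of_integral_eq_zero
          ((hcont x s hs).congr fun y => hq_symm y x s).aestronglyMeasurable
          (hcont z t ht).aestronglyMeasurable measurableSet_ball
          (ne_top_of_le_ne_top ofReal_ne_top hball) hosc (fun y => hq_size y z t ht) hsupp
          (by simpa only [hq_symm z] using hq_cancel z t ht)
    _ ≤ C * (5 * t) / s ^ (N + 1) * (C / t ^ N) * (c2 * (5 * t) ^ N) := by
        gcongr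
        exact toReal_le_of_le_ofReal (by positivity) hball
    _ = 5 ^ (N + 1) * C ^ 2 * c2 * t / s ^ (N + 1) := by
        rw [Real.mul_rpow (by norm_num) ht.le, Real.rpow_add_one (by norm_num : (5 : ℝ) ≠ 0) N]
        field_simp

theorem abs_integral_q_mul_q_le_min [BorelSpace X] {c2 : ℝ} (hN : 0 ≤ N) (hc2 : 0 ≤ c2)
    (hC : 0 ≤ C)
    (hm : ∀ (x : X) (r : ℝ), 0 < r → m (ball x r) ≤ ENNReal.ofReal (c2 * r ^ N))
    (hq_size : ∀ x y t, 0 < t → |q x y t| ≤ C / t ^ N)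
    (hq_supp : ∀ x y t, 0 < t → 4 * t < dist x y → q x y t = 0)
    (hq_cancel : ∀ (x : X) (t : ℝ), 0 < t → (∫ y, q x y t ∂m) = 0)
    (hq_symm : ∀ x y t, q x y t = q y x t)
    (hq_lip : ∀ x x' y t, 0 < t → |q x y t - q x' y t| ≤ C * dist x x' / t ^ (N + 1))
    {u v : ℝ} (hu : 0 < u) (hv : 0 < v) (x z : X) :
    |∫ y, q x y u * q y z (u * v) ∂m| ≤
      5 ^ (N + 1) * C ^ 2 * c2 * (2 / (1 + v)) ^ N * min v v⁻¹ * u ^ (-N) := by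
  have hbound := fun {s t : ℝ} => abs_integral_q_mul_q_le (s := s) (t := t) hc2 hC hm hq_size
    hq_supp hq_cancel hq_symm hq_lip
  rcases le_total v 1 with hv1 | hv1
  · rw [min_eq_left (hv1.trans (one_le_inv₀ hv |>.2 hv1))]
    calc |∫ y, q x y u * q y z (u * v) ∂m|
        ≤ 5 ^ (N + 1) * C ^ 2 * c2 * (u * v) / u ^ (N + 1) := hbound hu (by positivity) x z
      _ = 5 ^ (N + 1) * C ^ 2 * c2 * 1 * v * u ^ (-N) := by
        rw [Real.rpow_add_one hu.ne', Real.rpow_neg hu.le]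
        field_simp
      _ ≤ 5 ^ (N + 1) * C ^ 2 * c2 * (2 / (1 + v)) ^ N * v * u ^ (-N) := by
        gcongr
        exact Real.one_le_rpow ((one_le_div (by positivity)).2 (by linarith)) hN
  · rw [min_eq_right ((inv_le_one_of_one_le₀ hv1).trans hv1)]
    have hswap : ∀ y, q x y u * q y z (u * v) = q z y (u * v) * q y x u := fun y => by
      rw [hq_symm x y, hq_symm y z, mul_comm]
    calc |∫ y, q x y u * q y z (u * v) ∂m|
        ≤ 5 ^ (N + 1) * C ^ 2 * c2 * u / (u * v) ^ (N + 1) := by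
          simpa only [hswap] using hbound (by positivity) hu z x
      _ = 5 ^ (N + 1) * C ^ 2 * c2 * v⁻¹ ^ N * v⁻¹ * u ^ (-N) := by
        rw [Real.mul_rpow hu.le hv.le, Real.rpow_add_one hu.ne', Real.rpow_add_one hv.ne',
          Real.rpow_neg hu.le, Real.inv_rpow hv.le]
        field_simp
      _ ≤ 5 ^ (N + 1) * C ^ 2 * c2 * (2 / (1 + v)) ^ N * v⁻¹ * u ^ (-N) := by
        gcongr
        rw [inv_eq_one_div, div_le_div_iff₀ hv (by positivity)]
        linarith

end Kernel

theorem N_kernel_size_bound_general {X : Type*} [MetricSpace X] [MeasurableSpace X] [BorelSpace X]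
    (m : Measure X) (N c1 c2 C α : ℝ) (hN : 0 < N) (hc2 : 0 < c2)
    (hA : ∀ (x : X) (r : ℝ), 0 < r →
      ENNReal.ofReal (c1 * r ^ N) ≤ m (ball x r) ∧ m (ball x r) ≤ ENNReal.ofReal (c2 * r ^ N))
    (hC : 0 < C)
    (q : X → X → ℝ → ℝ)
    (hq_size : ∀ x y t, 0 < t → |q x y t| ≤ C / t ^ N)
    (hq_supp : ∀ x y t, 0 < t → 4 * t < dist x y → q x y t = 0)
    (hq_cancel : ∀ (x : X) (t : ℝ), 0 < t → (∫ y, q x y t ∂m) = 0)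
    (hq_symm : ∀ x y t, q x y t = q y x t)
    (hq_lip : ∀ x x' y t, 0 < t → |q x y t - q x' y t| ≤ C * dist x x' / t ^ (N + 1)) :
    ∃ C' : ℝ, 0 < C' ∧ ∀ v : ℝ, 0 < v → ∀ x z : X, x ≠ z →
      |∫ u in Set.Ioi (0 : ℝ),
          (1 + (u * v) ^ α)⁻¹ * (∫ y, q x y u * q y z (u * v) ∂m) / u| ≤
        C' * min v v⁻¹ * dist x z ^ (-N) := by
  refine ⟨5 ^ (N + 1) * C ^ 2 * c2 * 8 ^ N / N, by positivity, fun v hv x z hxz => ?_⟩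
  have hd : 0 < dist x z := dist_pos.2 hxz
  -- below the scale `a` the supports of `q x · u` and `q · z (u * v)` are disjoint
  set a := dist x z / (4 * (1 + v))
  have ha : 0 < a := by positivity
  have hscale : (2 / (1 + v)) ^ N * a ^ (-N) = 8 ^ N * dist x z ^ (-N) := by
    rw [Real.rpow_neg ha.le, Real.rpow_neg hd.le, ← Real.inv_rpow ha.le, ← Real.inv_rpow hd.le,
      ← Real.mul_rpow (by positivity) (by positivity),
      ← Real.mul_rpow (by norm_num) (by positivity)]
    congr 1
    simp only [a]
    field_simp
    norm_num
  calc _ ≤ 5 ^ (N + 1) * C ^ 2 * c2 * (2 / (1 + v)) ^ N * min v v⁻¹ * a ^ (-N) / N := by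
        refine abs_integral_Ioi_le_of_eq_zero_of_le_rpow hN ha (fun u hu hua => ?_) fun u hua => ?_
        · rw [integral_q_mul_q_eq_zero_of_lt_dist hq_supp hu (by positivity) ?_, mul_zero,
            zero_div]
          rw [lt_div_iff₀ (by positivity)] at hua
          linarith
        · have hu : 0 < u := ha.trans hua
          refine (abs_inv_one_add_rpow_mul_div_le (by positivity) hu α _).trans ?_
          rw [Real.rpow_sub_one hu.ne', ← mul_div_assoc]
          gcongr
          exact abs_integral_q_mul_q_le_min hN.le hc2.le hC.le (fun x r hr => (hA x r hr).2)
            hq_size hq_supp hq_cancel hq_symm hq_lip hu hv x z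
    _ = _ := by
        rw [mul_right_comm _ (min v v⁻¹), mul_assoc _ _ (a ^ (-N)), hscale]
        ring

/-- With `q` as in Statement 18, for `α > 0`, `v > 0` and `x ≠ z`,
the kernel `N_{α,v}(x,z) = ∫_0^∞ (1+(uv)^α)⁻¹ ∫ q(x,y,u) q(y,z,uv) dm(y) du/u` satisfies
`|N_{α,v}(x,z)| ≤ C' min(v, 1/v) d(x,z)^{-N}`. -/
theorem N_kernel_size_bound {X : Type*} [MetricSpace X] [MeasurableSpace X] [BorelSpace X]
    (m : Measure X) (N c1 c2 C α : ℝ) (hN : 0 < N) (hc1 : 0 < c1) (hc2 : 0 < c2)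
    (hA : ∀ (x : X) (r : ℝ), 0 < r →
      ENNReal.ofReal (c1 * r ^ N) ≤ m (ball x r) ∧ m (ball x r) ≤ ENNReal.ofReal (c2 * r ^ N))
    (hinf : m Set.univ = ⊤) (hC : 0 < C) (hα : 0 < α)
    (q : X → X → ℝ → ℝ)
    (hq_size : ∀ x y t, 0 < t → |q x y t| ≤ C / t ^ N)
    (hq_supp : ∀ x y t, 0 < t → 4 * t < dist x y → q x y t = 0)
    (hq_cancel : ∀ (x : X) (t : ℝ), 0 < t → (∫ y, q x y t ∂m) = 0)
    (hq_symm : ∀ x y t, q x y t = q y x t)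
    (hq_lip : ∀ x x' y t, 0 < t → |q x y t - q x' y t| ≤ C * dist x x' / t ^ (N + 1)) :
    ∃ C' : ℝ, 0 < C' ∧ ∀ v : ℝ, 0 < v → ∀ x z : X, x ≠ z →
      |∫ u in Set.Ioi (0 : ℝ),
          (1 + (u * v) ^ α)⁻¹ * (∫ y, q x y u * q y z (u * v) ∂m) / u| ≤
        C' * min v v⁻¹ * dist x z ^ (-N) :=
  N_kernel_size_bound_general m N c1 c2 C α hN hc2 hA hC q hq_size hq_supp hq_cancel hq_symm hq_lip
end
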